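/- arXiv:1907.03928 — 4 statements merged into one kernel-verified Lean document; each statement's English description precedes it below -/
import Mathlib

section
/- Let S and S' be sets, R ⊆ S × S' a relation, ⟨p_i⟩_{i∈I} a list of values in [0,1] with Σ_{i∈I} p_i = 1, and for each i ∈ I let Δ_i be a discrete probability distribution over S and Δ'_i a discrete probability distribution over S' with Δ_i R̄ Δ'_i. Then (Σ_{i∈I} p_i·Δ_i) R̄ (Σ_{i∈I} p_i·Δ'_i). -/
open Finset

/-- A discrete probability distribution over a finite type `S`. -/
structure ProbDist (S : Type) [Fintype S] where
  f : S → ℝ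
  nonneg : ∀ s, 0 ≤ f s
  sum_one : ∑ s, f s = 1

/-- The lifting of a relation `R ⊆ S × S'` to distributions, via weight functions. -/
def Lift {S S' : Type} [Fintype S] [Fintype S'] (R : S → S' → Prop)
    (Δ : ProbDist S) (Θ : ProbDist S') : Prop :=
  ∃ w : S → S' → ℝ,
    (∀ s t, 0 ≤ w s t) ∧
    (∀ s, ∑ t, w s t = Δ.f s) ∧
    (∀ t, ∑ s, w s t = Θ.f t) ∧
    (∀ s t, 0 < w s t → R s t)

/-- The point (Dirac) distribution at `s`. -/
def ProbDist.point {S : Type} [Fintype S] [DecidableEq S] (s : S) : ProbDist S where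
  f t := if t = s then 1 else 0
  nonneg t := by positivity
  sum_one := by simp

/-- **Lemma (lift-comb).** If `Δ_i R̄ Δ'_i` for all `i` and `⟨p_i⟩` are values in `[0,1]`
summing to `1`, then `(Σ_i p_i·Δ_i) R̄ (Σ_i p_i·Δ'_i)`. -/
theorem lift_convex_combination {S S' I : Type} [Fintype S] [Fintype S'] [Fintype I]
    (R : S → S' → Prop) (p : I → ℝ)
    (hp0 : ∀ i, 0 ≤ p i) (hp1 : ∀ i, p i ≤ 1) (hpsum : ∑ i, p i = 1)
    (Δ : I → ProbDist S) (Δ' : I → ProbDist S')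
    (h : ∀ i, Lift R (Δ i) (Δ' i))
    (Δmix : ProbDist S) (Δ'mix : ProbDist S')
    (hmix : ∀ s, Δmix.f s = ∑ i, p i * (Δ i).f s)
    (hmix' : ∀ t, Δ'mix.f t = ∑ i, p i * (Δ' i).f t) :
    Lift R Δmix Δ'mix := by
  choose w hw0 hw1 hw2 hw3 using h
  refine ⟨fun s t => ∑ i, p i * w i s t, ?_, ?_, ?_, ?_⟩
  · intro s t
    exact Finset.sum_nonneg fun i _ => mul_nonneg (hp0 i) (hw0 i s t)
  · intro s
    rw [hmix s, Finset.sum_comm]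
    exact Finset.sum_congr rfl fun i _ => by rw [← Finset.mul_sum, hw1 i s]
  · intro t
    rw [hmix' t, Finset.sum_comm]
    exact Finset.sum_congr rfl fun i _ => by rw [← Finset.mul_sum, hw2 i t]
  · intro s t hpos
    obtain ⟨i, -, hi⟩ := Finset.exists_lt_of_sum_lt
      (f := fun _ : I => (0:ℝ)) (by simpa using hpos)
    have : 0 < w i s t := by
      by_contra hle
      push_neg at hle
      have := mul_nonpos_of_nonneg_of_nonpos (hp0 i) hle
      exact absurd hi (not_lt.2 this)
    exact hw3 i s t this
end

section
/- Let G = ⟨S, s₀, L, Act, δ⟩ be a probabilistic game structure and ≼ a PA-simulation on G. If Δ ≼̄ Θ for distributions Δ, Θ ∈ Dist(S), then for every mixed action π₁ ∈ Π_I of player I there exists a mixed action π₂ ∈ Π_I such that δ̂(Δ,π₁) (≼̄)_Sm δ̂(Θ,π₂); that is, for every σ₂ ∈ Π_II there exists σ₁ ∈ Π_II with δ̂(Δ,⟨π₁,σ₁⟩) ≼̄ δ̂(Θ,⟨π₂,σ₂⟩). -/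
open Finset

/-- A probabilistic game structure with state space `S`, atomic propositions `P`,
    and action sets `A1` (player I) and `A2` (player II). -/
structure PGS (S P A1 A2 : Type) [Fintype S] [Fintype A1] [Fintype A2] where
  s0 : S
  label : S → Set P
  δ : S → A1 × A2 → ProbDist S

variable {S P A1 A2 : Type} [Fintype S] [Fintype A1] [Fintype A2]

/-- A mixed action of player I. -/
abbrev MixedI (S A1 : Type) [Fintype A1] := S → ProbDist A1

/-- A mixed action of player II. -/
abbrev MixedII (S A2 : Type) [Fintype A2] := S → ProbDist A2

/-- The extended transition function `δ̂(s, ⟨π₁, π₂⟩)` on a state. -/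
def PGS.stepState (G : PGS S P A1 A2) (s : S) (π1 : MixedI S A1) (π2 : MixedII S A2) :
    ProbDist S where
  f t := ∑ a1, ∑ a2, (π1 s).f a1 * (π2 s).f a2 * (G.δ s (a1, a2)).f t
  nonneg t := by
    refine Finset.sum_nonneg fun a1 _ => Finset.sum_nonneg fun a2 _ => ?_
    have h1 := (π1 s).nonneg a1
    have h2 := (π2 s).nonneg a2
    have h3 := (G.δ s (a1, a2)).nonneg t
    positivity
  sum_one := by
    rw [Finset.sum_comm]
    have h : ∀ a1 : A1, ∑ t, ∑ a2, (π1 s).f a1 * (π2 s).f a2 * (G.δ s (a1, a2)).f t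
        = (π1 s).f a1 := by
      intro a1
      rw [Finset.sum_comm]
      have h2 : ∀ a2 : A2, ∑ t, (π1 s).f a1 * (π2 s).f a2 * (G.δ s (a1, a2)).f t
          = (π1 s).f a1 * (π2 s).f a2 := by
        intro a2
        rw [← Finset.mul_sum, (G.δ s (a1, a2)).sum_one, mul_one]
      rw [Finset.sum_congr rfl fun a2 _ => h2 a2, ← Finset.mul_sum, (π2 s).sum_one, mul_one]
    rw [Finset.sum_congr rfl fun a1 _ => h a1, (π1 s).sum_one]

/-- The extended transition function `δ̂(Δ, ⟨π₁, π₂⟩)` on a distribution. -/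
def PGS.stepDist (G : PGS S P A1 A2) (Δ : ProbDist S) (π1 : MixedI S A1) (π2 : MixedII S A2) :
    ProbDist S where
  f s' := ∑ t, Δ.f t * (G.stepState t π1 π2).f s'
  nonneg s' := Finset.sum_nonneg fun t _ =>
    mul_nonneg (Δ.nonneg t) ((G.stepState t π1 π2).nonneg s')
  sum_one := by
    rw [Finset.sum_comm]
    have h : ∀ t : S, ∑ s', Δ.f t * (G.stepState t π1 π2).f s' = Δ.f t := by
      intro t
      rw [← Finset.mul_sum, (G.stepState t π1 π2).sum_one, mul_one]
    rw [Finset.sum_congr rfl fun t _ => h t, Δ.sum_one]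

/-- The set of distributions reachable from `s` when player I plays `π`:
    `δ̂(s, π) = {δ̂(s, ⟨π, π'⟩) | π' ∈ Π_II}`. -/
def PGS.stepSet (G : PGS S P A1 A2) (s : S) (π : MixedI S A1) : Set (ProbDist S) :=
  {Δ | ∃ π' : MixedII S A2, Δ = G.stepState s π π'}

/-- The Smyth order on sets of distributions with respect to the lifting of `R`:
    `P (R̄)_Sm Q` iff every element of `Q` is above (w.r.t. `R̄`) some element of `P`. -/
def SmythLift {S : Type} [Fintype S] (R : S → S → Prop) (Ps Qs : Set (ProbDist S)) : Prop :=
  ∀ Θ ∈ Qs, ∃ Δ ∈ Ps, Lift R Δ Θ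

/-- `R` is a probabilistic alternating simulation (PA-simulation) on `G`. -/
def IsPASim (G : PGS S P A1 A2) (R : S → S → Prop) : Prop :=
  ∀ s t, R s t →
    G.label s = G.label t ∧
    ∀ π1 : MixedI S A1, ∃ π2 : MixedI S A1,
      SmythLift R (G.stepSet s π1) (G.stepSet t π2)

/-- The syntax of the modal logic `L⊕`. -/
inductive LFormula (P : Type) : Type 1 where
  | atom : P → LFormula P
  | natom : P → LFormula P
  | conj : (I : Type) → (I → LFormula P) → LFormula P
  | disj : (I : Type) → (I → LFormula P) → LFormula P
  | enf : LFormula P → LFormula P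
  | psum : (n : ℕ) → (Fin n → ℝ) → (Fin n → LFormula P) → LFormula P
  | nsum : (n : ℕ) → (Fin n → LFormula P) → LFormula P

/-- The distribution semantics of `L⊕`: `Sat G φ Δ` means `Δ ∈ ⟦φ⟧`. -/
def Sat (G : PGS S P A1 A2) : LFormula P → ProbDist S → Prop
  | .atom p, Δ => ∀ s, 0 < Δ.f s → p ∈ G.label s
  | .natom p, Δ => ∀ s, 0 < Δ.f s → p ∉ G.label s
  | .conj _ f, Δ => ∀ i, Sat G (f i) Δ
  | .disj _ f, Δ => ∃ i, Sat G (f i) Δ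
  | .enf φ, Δ => ∃ π1 : MixedI S A1, ∀ π2 : MixedII S A2, Sat G φ (G.stepDist Δ π1 π2)
  | .psum n p f, Δ => ∃ D : Fin n → ProbDist S,
      (∀ s, Δ.f s = ∑ j, p j * (D j).f s) ∧ ∀ j, Sat G (f j) (D j)
  | .nsum n f, Δ => ∃ p : Fin n → ℝ, (∀ j, 0 ≤ p j) ∧ (∑ j, p j = 1) ∧
      ∃ D : Fin n → ProbDist S,
        (∀ s, Δ.f s = ∑ j, p j * (D j).f s) ∧ ∀ j, Sat G (f j) (D j)

/-- The approximating simulations `≼_n`. -/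
def SimN (G : PGS S P A1 A2) : ℕ → S → S → Prop
  | 0 => fun s t => G.label s = G.label t
  | n + 1 => fun s t => SimN G n s t ∧
      ∀ π1 : MixedI S A1, ∃ π2 : MixedI S A1,
        SmythLift (SimN G n) (G.stepSet s π1) (G.stepSet t π2)

/-- Formulas of `L⊕₀`: built from literals `p`, `¬p` and conjunctions only. -/
inductive IsLevel0 {P : Type} : LFormula P → Prop where
  | atom (p : P) : IsLevel0 (.atom p)
  | natom (p : P) : IsLevel0 (.natom p)
  | conj (I : Type) (f : I → LFormula P) (h : ∀ i, IsLevel0 (f i)) : IsLevel0 (.conj I f)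

/-- The level-`n` fragments `L⊕_n` of the logic `L⊕`:
    `L⊕₀` is built from literals and conjunctions; `φ ∈ L⊕_{n+1}` if `φ ∈ L⊕_n` or `φ` is
    a conjunction of formulas of the form `⟪I⟫ ⊕_i Σ_j p_j φ_{i,j}` with each `φ_{i,j} ∈ L⊕_n`. -/
def InLevel {P : Type} : ℕ → LFormula P → Prop
  | 0, φ => IsLevel0 φ
  | n + 1, φ => InLevel n φ ∨
      ∃ (I : Type) (f : I → LFormula P), φ = .conj I f ∧
        ∀ i, ∃ (m : ℕ) (ks : Fin m → ℕ) (ps : (k : Fin m) → Fin (ks k) → ℝ)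
            (gs : (k : Fin m) → Fin (ks k) → LFormula P),
            f i = .enf (.nsum m (fun k => .psum (ks k) (ps k) (gs k))) ∧
            ∀ k j, InLevel n (gs k j)

/-- `s ≼^L_n t`: every `L⊕`-formula of level at most `n` satisfied by the point
    distribution of `s` is satisfied by the point distribution of `t`. -/
def SimLn (G : PGS S P A1 A2) [DecidableEq S] (n : ℕ) (s t : S) : Prop :=
  ∀ φ : LFormula P, InLevel n φ →
    Sat G φ (ProbDist.point s) → Sat G φ (ProbDist.point t)

/-- The support of a distribution, as a finset. -/
noncomputable def ProbDist.support {S : Type} [Fintype S] (Δ : ProbDist S) : Finset S :=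
  Finset.univ.filter (fun s => 0 < Δ.f s)

/-- The characteristic formula `φ^n_Δ = ⊕_{t ∈ supp Δ} Δ(t)·c(t)` of a distribution,
    given the characteristic formulas `c` of states. -/
noncomputable def charDist (c : S → LFormula P) (Δ : ProbDist S) : LFormula P :=
  .psum Δ.support.card
    (fun i => Δ.f ((Δ.support.equivFin.symm i) : S))
    (fun i => c ((Δ.support.equivFin.symm i) : S))

open Classical in
/-- The `0`-characteristic formula
    `φ⁰_s = ⋀{p | p ∈ L(s)} ∧ ⋀{¬q | q ∈ Prop ∖ L(s)}` of a state. -/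
noncomputable def char0 (G : PGS S P A1 A2) (s : S) : LFormula P :=
  .conj P (fun p => if p ∈ G.label s then .atom p else .natom p)

/-- The `n`-characteristic formulas `φ^n_s` of states:
    `φ^{n+1}_s = ⋀_{π ∈ Dist(Act_I)} ⟪I⟫ ⊕_{b ∈ Act_II} φ^n_{δ̂(s,⟨π,b̄⟩)}`. -/
noncomputable def charState (G : PGS S P A1 A2) [DecidableEq A2] : ℕ → S → LFormula P
  | 0, s => char0 G s
  | n + 1, s => .conj (ProbDist A1) (fun π => .enf (.nsum (Fintype.card A2) (fun b =>
      charDist (charState G n)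
        (G.stepState s (fun _ => π)
          (fun _ => ProbDist.point ((Fintype.equivFin A2).symm b))))))

/-- The syntax of the probabilistic alternating-time mu-calculus PAMu,
    with variables drawn from `ℕ`. -/
inductive MuFormula (P : Type) : Type 1 where
  | atom : P → MuFormula P
  | natom : P → MuFormula P
  | conj : (I : Type) → (I → MuFormula P) → MuFormula P
  | disj : (I : Type) → (I → MuFormula P) → MuFormula P
  | enf : MuFormula P → MuFormula P
  | psum : (n : ℕ) → (Fin n → ℝ) → (Fin n → MuFormula P) → MuFormula P
  | nsum : (n : ℕ) → (Fin n → MuFormula P) → MuFormula P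
  | var : ℕ → MuFormula P
  | mu : ℕ → MuFormula P → MuFormula P
  | nu : ℕ → MuFormula P → MuFormula P

/-- The semantics `⟦φ⟧ρ ⊆ Dist(S)` of PAMu formulas, relative to an
    environment `ρ` mapping variables to sets of distributions. -/
def MuSem (G : PGS S P A1 A2) : MuFormula P → (ℕ → Set (ProbDist S)) → Set (ProbDist S)
  | .atom p, _ => {Δ | ∀ s, 0 < Δ.f s → p ∈ G.label s}
  | .natom p, _ => {Δ | ∀ s, 0 < Δ.f s → p ∉ G.label s}
  | .conj _ f, ρ => ⋂ i, MuSem G (f i) ρ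
  | .disj _ f, ρ => ⋃ i, MuSem G (f i) ρ
  | .enf φ, ρ => {Δ | ∃ π1 : MixedI S A1, ∀ π2 : MixedII S A2,
      G.stepDist Δ π1 π2 ∈ MuSem G φ ρ}
  | .psum n p f, ρ => {Δ | ∃ D : Fin n → ProbDist S,
      (∀ s, Δ.f s = ∑ j, p j * (D j).f s) ∧ ∀ j, D j ∈ MuSem G (f j) ρ}
  | .nsum n f, ρ => {Δ | ∃ p : Fin n → ℝ, (∀ j, 0 ≤ p j) ∧ (∑ j, p j = 1) ∧
      ∃ D : Fin n → ProbDist S,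
        (∀ s, Δ.f s = ∑ j, p j * (D j).f s) ∧ ∀ j, D j ∈ MuSem G (f j) ρ}
  | .var v, ρ => ρ v
  | .mu v φ, ρ => ⋂₀ {D | MuSem G φ (Function.update ρ v D) ⊆ D}
  | .nu v φ, ρ => ⋃₀ {D | D ⊆ MuSem G φ (Function.update ρ v D)}

/-- The free variables of a PAMu formula. -/
def MuFormula.FV {P : Type} : MuFormula P → Set ℕ
  | .atom _ => ∅
  | .natom _ => ∅
  | .conj _ f => ⋃ i, (f i).FV
  | .disj _ f => ⋃ i, (f i).FV
  | .enf φ => φ.FV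
  | .psum _ _ f => ⋃ j, (f j).FV
  | .nsum _ f => ⋃ j, (f j).FV
  | .var v => {v}
  | .mu v φ => φ.FV \ {v}
  | .nu v φ => φ.FV \ {v}

/-- Substitution `φ[Z ↦ ψ]` of `ψ` for the free occurrences of variable `v` in `φ`. -/
def MuFormula.subst {P : Type} (v : ℕ) (ψ : MuFormula P) : MuFormula P → MuFormula P
  | .atom p => .atom p
  | .natom p => .natom p
  | .conj I f => .conj I (fun i => MuFormula.subst v ψ (f i))
  | .disj I f => .disj I (fun i => MuFormula.subst v ψ (f i))
  | .enf φ => .enf (MuFormula.subst v ψ φ)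
  | .psum n p f => .psum n p (fun j => MuFormula.subst v ψ (f j))
  | .nsum n f => .nsum n (fun j => MuFormula.subst v ψ (f j))
  | .var w => if w = v then ψ else .var w
  | .mu w φ => if w = v then .mu w φ else .mu w (MuFormula.subst v ψ φ)
  | .nu w φ => if w = v then .nu w φ else .nu w (MuFormula.subst v ψ φ)

/-- `⊥`: the empty disjunction, false everywhere. -/
def MuFormula.bot (P : Type) : MuFormula P := .disj Empty (fun e => e.elim)

/-- `⊤`: the empty conjunction, true everywhere. -/
def MuFormula.top (P : Type) : MuFormula P := .conj Empty (fun e => e.elim)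

/-- The approximants `μ^i Z.φ` of a least-fixpoint formula:
    `μ⁰Z.φ = ⊥` and `μ^{i+1}Z.φ = φ[Z ↦ μ^i Z.φ]`. -/
def muApprox {P : Type} (v : ℕ) (φ : MuFormula P) : ℕ → MuFormula P
  | 0 => MuFormula.bot P
  | i + 1 => MuFormula.subst v (muApprox v φ i) φ

/-- The approximants `ν^i Z.φ` of a greatest-fixpoint formula:
    `ν⁰Z.φ = ⊤` and `ν^{i+1}Z.φ = φ[Z ↦ ν^i Z.φ]`. -/
def nuApprox {P : Type} (v : ℕ) (φ : MuFormula P) : ℕ → MuFormula P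
  | 0 => MuFormula.top P
  | i + 1 => MuFormula.subst v (nuApprox v φ i) φ

/-- Mixture of probability distributions. -/
def ProbDist.mix {T ι : Type} [Fintype T] [Fintype ι] (c : ι → ℝ)
    (hc0 : ∀ i, 0 ≤ c i) (hc1 : ∑ i, c i = 1) (D : ι → ProbDist T) : ProbDist T where
  f a := ∑ i, c i * (D i).f a
  nonneg a := Finset.sum_nonneg fun i _ => mul_nonneg (hc0 i) ((D i).nonneg a)
  sum_one := by
    rw [Finset.sum_comm]
    calc ∑ i, ∑ a, c i * (D i).f a = ∑ i, c i := by
          refine Finset.sum_congr rfl fun i _ => ?_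
          rw [← Finset.mul_sum, (D i).sum_one, mul_one]
      _ = 1 := hc1

/-- `stepState` is linear in the player II mixed action at the given state. -/
lemma PGS.stepState_mixII {ι : Type} [Fintype ι]
    (G : PGS S P A1 A2) (s : S) (π1 : MixedI S A1) (σ : MixedII S A2)
    (c : ι → ℝ) (D : ι → MixedII S A2)
    (hσ : ∀ a2, (σ s).f a2 = ∑ i, c i * ((D i) s).f a2) (u : S) :
    (G.stepState s π1 σ).f u = ∑ i, c i * (G.stepState s π1 (D i)).f u := by
  simp only [PGS.stepState]
  have key : ∀ a1 a2, (π1 s).f a1 * (σ s).f a2 * (G.δ s (a1, a2)).f u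
      = ∑ i, c i * ((π1 s).f a1 * ((D i) s).f a2 * (G.δ s (a1, a2)).f u) := by
    intro a1 a2
    rw [hσ, Finset.mul_sum, Finset.sum_mul]
    exact Finset.sum_congr rfl fun i _ => by ring
  simp only [key, Finset.mul_sum]
  rw [show (∑ a1, ∑ a2, ∑ i, c i * ((π1 s).f a1 * ((D i) s).f a2 * (G.δ s (a1, a2)).f u))
      = ∑ i, ∑ a1, ∑ a2, c i * ((π1 s).f a1 * ((D i) s).f a2 * (G.δ s (a1, a2)).f u) from
    (Finset.sum_congr rfl fun a1 _ => Finset.sum_comm).trans Finset.sum_comm]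

/-- `stepState` is linear in the player I mixed action at the given state. -/
lemma PGS.stepState_mixI {ι : Type} [Fintype ι]
    (G : PGS S P A1 A2) (t : S) (π : MixedI S A1) (σ2 : MixedII S A2)
    (c : ι → ℝ) (D : ι → MixedI S A1)
    (hπ : ∀ a1, (π t).f a1 = ∑ i, c i * ((D i) t).f a1) (v : S) :
    (G.stepState t π σ2).f v = ∑ i, c i * (G.stepState t (D i) σ2).f v := by
  simp only [PGS.stepState]
  have key : ∀ a1 a2, (π t).f a1 * (σ2 t).f a2 * (G.δ t (a1, a2)).f v
      = ∑ i, c i * ((D i t).f a1 * (σ2 t).f a2 * (G.δ t (a1, a2)).f v) := by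
    intro a1 a2
    rw [hπ, Finset.sum_mul, Finset.sum_mul]
    exact Finset.sum_congr rfl fun i _ => by ring
  simp only [key, Finset.mul_sum]
  rw [show (∑ a1, ∑ a2, ∑ i, c i * ((D i t).f a1 * (σ2 t).f a2 * (G.δ t (a1, a2)).f v))
      = ∑ i, ∑ a1, ∑ a2, c i * ((D i t).f a1 * (σ2 t).f a2 * (G.δ t (a1, a2)).f v) from
    (Finset.sum_congr rfl fun a1 _ => Finset.sum_comm).trans Finset.sum_comm]

/-- **Lemma (lifted simulation).** If `≼` is a PA-simulation and `Δ ≼̄ Θ`, then for every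
player I mixed action `π₁` there is a player I mixed action `π₂` with
`δ̂(Δ,π₁) (≼̄)_Sm δ̂(Θ,π₂)`: for every `σ₂ ∈ Π_II` there exists `σ₁ ∈ Π_II` such that
`δ̂(Δ,⟨π₁,σ₁⟩) ≼̄ δ̂(Θ,⟨π₂,σ₂⟩)`. -/
theorem lifted_pa_sim {S P A1 A2 : Type}
    [Fintype S] [Fintype A1] [Fintype A2] [Fintype P]
    (G : PGS S P A1 A2) (R : S → S → Prop) (hR : IsPASim G R)
    (Δ Θ : ProbDist S) (h : Lift R Δ Θ) :
    ∀ π1 : MixedI S A1, ∃ π2 : MixedI S A1, ∀ σ2 : MixedII S A2, ∃ σ1 : MixedII S A2,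
      Lift R (G.stepDist Δ π1 σ1) (G.stepDist Θ π2 σ2) := by
  classical
  obtain ⟨w, hw0, hwΔ, hwΘ, hwR⟩ := h
  intro π1
  -- vanishing weights
  have hwz : ∀ s t, ¬ 0 < w s t → w s t = 0 := fun s t h =>
    le_antisymm (not_lt.1 h) (hw0 s t)
  have hΔz : ∀ s, ¬ 0 < Δ.f s → ∀ t, w s t = 0 := by
    intro s hs t
    have h0 : Δ.f s = 0 := le_antisymm (not_lt.1 hs) (Δ.nonneg s)
    have := (Finset.sum_eq_zero_iff_of_nonneg
      (fun t _ => hw0 s t)).1 ((hwΔ s).trans h0) t (Finset.mem_univ t)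
    exact this
  have hΘz : ∀ t, ¬ 0 < Θ.f t → ∀ s, w s t = 0 := by
    intro t ht s
    have h0 : Θ.f t = 0 := le_antisymm (not_lt.1 ht) (Θ.nonneg t)
    exact (Finset.sum_eq_zero_iff_of_nonneg
      (fun s _ => hw0 s t)).1 ((hwΘ t).trans h0) s (Finset.mem_univ s)
  -- per-pair strategies for player I from the simulation
  have hsim : ∀ s t, 0 < w s t → ∃ π2 : MixedI S A1,
      SmythLift R (G.stepSet s π1) (G.stepSet t π2) :=
    fun s t hst => (hR s t (hwR s t hst)).2 π1
  let P2 : S → S → MixedI S A1 := fun s t =>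
    if h : 0 < w s t then (hsim s t h).choose else π1
  have hP2 : ∀ s t (h : 0 < w s t),
      SmythLift R (G.stepSet s π1) (G.stepSet t (P2 s t)) := by
    intro s t h
    simp only [P2, dif_pos h]
    exact (hsim s t h).choose_spec
  -- the combined player I strategy π2 : mixture of the P2 s t at each t
  let π2 : MixedI S A1 := fun t =>
    if h : 0 < Θ.f t then
      ProbDist.mix (fun s => w s t / Θ.f t)
        (fun s => div_nonneg (hw0 s t) (Θ.nonneg t))
        (by rw [← Finset.sum_div, hwΘ t, div_self h.ne']) (fun s => P2 s t t)
    else π1 t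
  refine ⟨π2, fun σ2 => ?_⟩
  -- per-pair answers for player II, with witnessing weight functions
  have key : ∀ s t, 0 < w s t → ∃ σ1 : MixedII S A2, ∃ ww : S → S → ℝ,
      (∀ u v, 0 ≤ ww u v) ∧
      (∀ u, ∑ v, ww u v = (G.stepState s π1 σ1).f u) ∧
      (∀ v, ∑ u, ww u v = (G.stepState t (P2 s t) σ2).f v) ∧
      (∀ u v, 0 < ww u v → R u v) := by
    intro s t hst
    obtain ⟨Δ', hmem, hl⟩ := hP2 s t hst (G.stepState t (P2 s t) σ2) ⟨σ2, rfl⟩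
    obtain ⟨σ1, rfl⟩ := hmem
    obtain ⟨ww, h1, h2, h3, h4⟩ := hl
    exact ⟨σ1, ww, h1, h2, h3, h4⟩
  let S1 : S → S → MixedII S A2 := fun s t =>
    if h : 0 < w s t then (key s t h).choose else σ2
  let WW : S → S → S → S → ℝ := fun s t =>
    if h : 0 < w s t then (key s t h).choose_spec.choose else fun _ _ => 0
  have hWW : ∀ s t (h : 0 < w s t),
      (∀ u v, 0 ≤ WW s t u v) ∧
      (∀ u, ∑ v, WW s t u v = (G.stepState s π1 (S1 s t)).f u) ∧
      (∀ v, ∑ u, WW s t u v = (G.stepState t (P2 s t) σ2).f v) ∧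
      (∀ u v, 0 < WW s t u v → R u v) := by
    intro s t h
    simp only [S1, WW, dif_pos h]
    exact (key s t h).choose_spec.choose_spec
  -- the combined player II answer σ1 : mixture of the S1 s t at each s
  let σ1 : MixedII S A2 := fun s =>
    if h : 0 < Δ.f s then
      ProbDist.mix (fun t => w s t / Δ.f s)
        (fun t => div_nonneg (hw0 s t) (Δ.nonneg s))
        (by rw [← Finset.sum_div, hwΔ s, div_self h.ne']) (fun t => S1 s t s)
    else σ2 s
  refine ⟨σ1, fun u v => ∑ s, ∑ t, w s t * WW s t u v, ?_, ?_, ?_, ?_⟩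
  · -- nonnegativity
    intro u v
    refine Finset.sum_nonneg fun s _ => Finset.sum_nonneg fun t _ => ?_
    by_cases h : 0 < w s t
    · exact mul_nonneg (hw0 s t) ((hWW s t h).1 u v)
    · rw [hwz s t h, zero_mul]
  · -- first marginal
    intro u
    show ∑ v, ∑ s, ∑ t, w s t * WW s t u v = ∑ t, Δ.f t * (G.stepState t π1 σ1).f u
    rw [Finset.sum_comm]
    refine Finset.sum_congr rfl fun s _ => ?_
    rw [Finset.sum_comm]
    calc ∑ t, ∑ v, w s t * WW s t u v
        = ∑ t, w s t * (G.stepState s π1 (S1 s t)).f u := by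
          refine Finset.sum_congr rfl fun t _ => ?_
          by_cases h : 0 < w s t
          · rw [← Finset.mul_sum, (hWW s t h).2.1 u]
          · simp [hwz s t h]
      _ = Δ.f s * (G.stepState s π1 σ1).f u := by
          by_cases h : 0 < Δ.f s
          · rw [G.stepState_mixII s π1 σ1 (fun t => w s t / Δ.f s) (fun t => S1 s t)
              (fun a2 => by simp only [σ1, dif_pos h, ProbDist.mix]) u, Finset.mul_sum]
            refine Finset.sum_congr rfl fun t _ => ?_
            field_simp
          · rw [le_antisymm (not_lt.1 h) (Δ.nonneg s), zero_mul]
            exact Finset.sum_eq_zero fun t _ => by rw [hΔz s h t, zero_mul]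
  · -- second marginal
    intro v
    show ∑ u, ∑ s, ∑ t, w s t * WW s t u v = ∑ t, Θ.f t * (G.stepState t π2 σ2).f v
    rw [Finset.sum_comm]
    calc ∑ s, ∑ u, ∑ t, w s t * WW s t u v
        = ∑ s, ∑ t, w s t * (G.stepState t (P2 s t) σ2).f v := by
          refine Finset.sum_congr rfl fun s _ => ?_
          rw [Finset.sum_comm]
          refine Finset.sum_congr rfl fun t _ => ?_
          by_cases h : 0 < w s t
          · rw [← Finset.mul_sum, (hWW s t h).2.2.1 v]
          · simp [hwz s t h]
      _ = ∑ t, Θ.f t * (G.stepState t π2 σ2).f v := by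
          rw [Finset.sum_comm]
          refine Finset.sum_congr rfl fun t _ => ?_
          by_cases h : 0 < Θ.f t
          · rw [G.stepState_mixI t π2 σ2 (fun s => w s t / Θ.f t) (fun s => P2 s t)
              (fun a1 => by simp only [π2, dif_pos h, ProbDist.mix]) v, Finset.mul_sum]
            refine Finset.sum_congr rfl fun s _ => ?_
            field_simp
          · rw [le_antisymm (not_lt.1 h) (Θ.nonneg t), zero_mul]
            exact Finset.sum_eq_zero fun s _ => by rw [hΘz t h s, zero_mul]
  · -- support in R
    intro u v huv
    have h1 : ∃ s ∈ Finset.univ (α := S), 0 < ∑ t, w s t * WW s t u v := by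
      by_contra hc
      push_neg at hc
      exact absurd (Finset.sum_nonpos fun s hs =>
        not_lt.1 fun hlt => absurd hlt (not_lt.2 (hc s hs))) (not_le.2 huv)
    obtain ⟨s, _, hs⟩ := h1
    have h2 : ∃ t ∈ Finset.univ (α := S), 0 < w s t * WW s t u v := by
      by_contra hc
      push_neg at hc
      exact absurd (Finset.sum_nonpos fun t ht =>
        not_lt.1 fun hlt => absurd hlt (not_lt.2 (hc t ht))) (not_le.2 hs)
    obtain ⟨t, _, ht⟩ := h2
    have hwst : 0 < w s t := by
      by_contra hc
      rw [hwz s t hc, zero_mul] at ht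
      exact lt_irrefl 0 ht
    have hWWpos : 0 < WW s t u v := by
      by_contra hc
      have : w s t * WW s t u v ≤ 0 :=
        mul_nonpos_of_nonneg_of_nonpos (hw0 s t) (not_lt.1 hc)
      exact absurd ht (not_lt.2 this)
    exact (hWW s t hwst).2.2.2 u v hWWpos
end

section
/- In a finite probabilistic game structure, for every distribution Δ ∈ Dist(S) and every n ∈ ℕ, Δ satisfies its own n-characteristic formula φ^n_Δ. -/
open Finset

variable {S P A1 A2 : Type} [Fintype S] [Fintype A1] [Fintype A2]

lemma satCharDist_of_point {S P A1 A2 : Type}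
    [Fintype S] [DecidableEq S] [Fintype A1] [Fintype A2]
    (G : PGS S P A1 A2) (c : S → LFormula P)
    (h : ∀ s, Sat G (c s) (ProbDist.point s)) (Δ : ProbDist S) :
    Sat G (charDist c Δ) Δ := by
  refine ⟨fun i => ProbDist.point ((Δ.support.equivFin.symm i : S)), ?_, fun i => h _⟩
  intro s
  have hc : ∑ i, Δ.f ((Δ.support.equivFin.symm i : S)) *
      (ProbDist.point ((Δ.support.equivFin.symm i : S))).f s
      = ∑ t : {x // x ∈ Δ.support}, Δ.f (t : S) * (ProbDist.point (t : S)).f s :=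
    Equiv.sum_comp Δ.support.equivFin.symm
      (fun t : {x // x ∈ Δ.support} => Δ.f (t : S) * (ProbDist.point (t : S)).f s)
  rw [hc, Finset.sum_coe_sort Δ.support
    (fun t => Δ.f t * (ProbDist.point t).f s)]
  simp only [ProbDist.point, mul_ite, mul_one, mul_zero]
  rw [Finset.sum_ite_eq Δ.support s (fun t => Δ.f t)]
  by_cases hs : s ∈ Δ.support
  · simp [hs]
  · have h0 : ¬ 0 < Δ.f s := by
      simpa [ProbDist.support] using hs
    have := Δ.nonneg s
    simp [hs]
    linarith

lemma satCharState_point {S P A1 A2 : Type}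
    [Fintype S] [DecidableEq S] [Fintype A1] [Fintype A2] [DecidableEq A2]
    (G : PGS S P A1 A2) : ∀ (n : ℕ) (s : S), Sat G (charState G n s) (ProbDist.point s) := by
  intro n
  induction n with
  | zero =>
    intro s p
    have key : ∀ u : S, 0 < (ProbDist.point s).f u → u = s := by
      intro u hu
      by_contra h
      simp [ProbDist.point, h] at hu
    simp only [char0]
    split
    · intro u hu; rw [key u hu]; assumption
    · intro u hu; rw [key u hu]; assumption
  | succ n ih =>
    intro s π
    refine ⟨fun _ => π, fun π2 => ?_⟩
    refine ⟨fun b => (π2 s).f ((Fintype.equivFin A2).symm b),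
      fun b => (π2 s).nonneg _, ?_, fun b =>
        G.stepState s (fun _ => π)
          (fun _ => ProbDist.point ((Fintype.equivFin A2).symm b)), ?_,
      fun b => satCharDist_of_point G _ ih _⟩
    · exact (Equiv.sum_comp (Fintype.equivFin A2).symm ((π2 s).f)).trans (π2 s).sum_one
    · intro u
      show (∑ t, (ProbDist.point s).f t * (G.stepState t (fun _ => π) π2).f u) = _
      simp only [ProbDist.point, ite_mul, one_mul, zero_mul]
      rw [Finset.sum_ite_eq' Finset.univ s (fun t => (G.stepState t (fun _ => π) π2).f u)]
      simp only [Finset.mem_univ, if_true]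
      show (∑ a1, ∑ a2, π.f a1 * (π2 s).f a2 * (G.δ s (a1, a2)).f u) = _
      have hrhs : ∀ b : Fin (Fintype.card A2),
          (G.stepState s (fun _ => π)
            (fun _ => ProbDist.point ((Fintype.equivFin A2).symm b))).f u
          = ∑ a1, π.f a1 * (G.δ s (a1, (Fintype.equivFin A2).symm b)).f u := by
        intro b
        show (∑ a1, ∑ a2, π.f a1 * (ProbDist.point ((Fintype.equivFin A2).symm b)).f a2 *
          (G.δ s (a1, a2)).f u) = _
        refine Finset.sum_congr rfl fun a1 _ => ?_
        simp only [ProbDist.point, mul_ite, ite_mul, mul_one, mul_zero, zero_mul]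
        rw [Finset.sum_ite_eq' Finset.univ ((Fintype.equivFin A2).symm b)
          (fun a2 => π.f a1 * (G.δ s (a1, a2)).f u)]
        rw [if_pos (Finset.mem_univ _)]
      simp only [ProbDist.point] at hrhs
      simp only [hrhs]
      have hre : ∑ b : Fin (Fintype.card A2),
          (π2 s).f ((Fintype.equivFin A2).symm b) *
            ∑ a1, π.f a1 * (G.δ s (a1, (Fintype.equivFin A2).symm b)).f u
          = ∑ a2, (π2 s).f a2 * ∑ a1, π.f a1 * (G.δ s (a1, a2)).f u :=
        Equiv.sum_comp (Fintype.equivFin A2).symm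
          (fun a2 => (π2 s).f a2 * ∑ a1, π.f a1 * (G.δ s (a1, a2)).f u)
      rw [hre, Finset.sum_comm]
      refine Finset.sum_congr rfl fun a2 _ => ?_
      rw [Finset.mul_sum]
      refine Finset.sum_congr rfl fun a1 _ => ?_
      ring

/-- **Lemma.** Every distribution satisfies its own `n`-characteristic formula `φ^n_Δ`. -/
theorem sat_own_characteristic {S P A1 A2 : Type}
    [Fintype S] [DecidableEq S] [Fintype A1] [Fintype A2] [DecidableEq A2] [Fintype P]
    (G : PGS S P A1 A2) (Δ : ProbDist S) (n : ℕ) :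
    Sat G (charDist (charState G n) Δ) Δ := by
  exact satCharDist_of_point G _ (satCharState_point G n) Δ
end

section
/- In a finite probabilistic game structure, fix n ∈ ℕ and suppose that for all states s, t ∈ S, s ≼^L_n t implies that the point distribution of t satisfies the n-characteristic formula φ^n_s. Then for all distributions Δ, Θ ∈ Dist(S): if Δ (≼̄^L_n) Θ (the lifting of ≼^L_n to distributions), then Θ satisfies the n-characteristic formula φ^n_Δ. -/
open Finset

variable {S P A1 A2 : Type} [Fintype S] [Fintype A1] [Fintype A2]

/-! Lifting `Δ (≼̄^L_n) Θ` along a weight function `w` splits `Θ` as `∑ s, Δ(s) · Θ_s`, where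
`Θ_s = w(s, ·) / Δ(s)` is a convex combination of point distributions of states `t` with
`s ≼^L_n t`, each of which satisfies `φ^n_s`. Characteristic formulas contain no disjunction, and
the set of distributions satisfying a disjunction-free formula is closed under convex combinations:
for `⟪I⟫ φ`, player I mixes the witnessing strategies state by state, weighted by the mass each
component puts on that state. Hence every `Θ_s` satisfies `φ^n_s`, and `Θ` satisfies `φ^n_Δ`. -/

inductive DisjFree {P : Type} : LFormula P → Prop
  | atom (p : P) : DisjFree (.atom p)
  | natom (p : P) : DisjFree (.natom p)
  | conj (I : Type) (f : I → LFormula P) (h : ∀ i, DisjFree (f i)) : DisjFree (.conj I f)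
  | enf (φ : LFormula P) (h : DisjFree φ) : DisjFree (.enf φ)
  | psum (n : ℕ) (p : Fin n → ℝ) (f : Fin n → LFormula P) (h : ∀ j, DisjFree (f j)) :
      DisjFree (.psum n p f)
  | nsum (n : ℕ) (f : Fin n → LFormula P) (h : ∀ j, DisjFree (f j)) : DisjFree (.nsum n f)

section Mixtures

variable {α ι : Type} [Fintype α] [Fintype ι]

namespace ProbDist

noncomputable def mix_s18 (c : ι → ℝ) (hc : ∀ k, 0 ≤ c k) (hpos : 0 < ∑ k, c k)
    (D : ι → ProbDist α) : ProbDist α where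
  f a := (∑ k, c k * (D k).f a) / ∑ k, c k
  nonneg a := div_nonneg (sum_nonneg fun k _ => mul_nonneg (hc k) ((D k).nonneg a)) hpos.le
  sum_one := by
    rw [← sum_div, sum_comm, div_eq_one_iff_eq hpos.ne']
    simp only [← mul_sum, (D _).sum_one, mul_one]

lemma sum_mul_mix_apply {c : ι → ℝ} (hc : ∀ k, 0 ≤ c k) (hpos : 0 < ∑ k, c k)
    (D : ι → ProbDist α) (a : α) :
    (∑ k, c k) * (mix_s18 c hc hpos D).f a = ∑ k, c k * (D k).f a :=
  mul_div_cancel₀ _ hpos.ne'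

variable {lam : ι → ℝ} {D : ι → ProbDist α} {Θ : ProbDist α}

lemma sum_eq_one_of_apply_eq_sum (hΘ : ∀ a, Θ.f a = ∑ k, lam k * (D k).f a) :
    ∑ k, lam k = 1 :=
  calc ∑ k, lam k = ∑ k, lam k * ∑ a, (D k).f a := by simp only [(D _).sum_one, mul_one]
    _ = ∑ a, Θ.f a := by simp only [hΘ, mul_sum]; exact sum_comm
    _ = 1 := Θ.sum_one

lemma nonempty_of_apply_eq_sum (hΘ : ∀ a, Θ.f a = ∑ k, lam k * (D k).f a) : Nonempty ι := by
  by_contra h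
  rw [not_nonempty_iff] at h
  simpa using sum_eq_one_of_apply_eq_sum hΘ

lemma exists_pos_of_apply_eq_sum (hΘ : ∀ a, Θ.f a = ∑ k, lam k * (D k).f a) {a : α}
    (ha : 0 < Θ.f a) : ∃ k, 0 < lam k * (D k).f a := by
  obtain ⟨k, -, hk⟩ := exists_lt_of_sum_lt (s := univ) (f := fun _ => (0 : ℝ))
    (g := fun k => lam k * (D k).f a) (by rw [sum_const_zero, ← hΘ]; exact ha)
  exact ⟨k, hk⟩

end ProbDist

/-- Weights are positive so that every component carries a witness; `MixClosed.of_nonneg`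
readmits zero weights. -/
def MixClosed (Q : ProbDist α → Prop) : Prop :=
  ∀ (ι : Type) [Fintype ι] (lam : ι → ℝ) (D : ι → ProbDist α) (Θ : ProbDist α),
    (∀ k, 0 < lam k) → (∀ k, Q (D k)) → (∀ a, Θ.f a = ∑ k, lam k * (D k).f a) → Q Θ

namespace MixClosed

variable {Q : ProbDist α → Prop}

lemma of_nonneg (hQ : MixClosed Q) {lam : ι → ℝ} {D : ι → ProbDist α} {Θ : ProbDist α}
    (hlam : ∀ k, 0 ≤ lam k) (hD : ∀ k, 0 < lam k → Q (D k))
    (hΘ : ∀ a, Θ.f a = ∑ k, lam k * (D k).f a) : Q Θ := by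
  classical
  refine hQ {k // 0 < lam k} (fun k => lam k) (fun k => D k) Θ (fun k => k.2)
    (fun k => hD k k.2) fun a => ?_
  rw [hΘ, ← sum_filter_of_ne fun k _ hk => (hlam k).lt_of_ne' (left_ne_zero_of_mul hk)]
  exact sum_subtype _ (by simp) _

lemma mix_s18 (hQ : MixClosed Q) {c : ι → ℝ} (hc : ∀ k, 0 ≤ c k) (hpos : 0 < ∑ k, c k)
    {D : ι → ProbDist α} (hD : ∀ k, 0 < c k → Q (D k)) : Q (ProbDist.mix_s18 c hc hpos D) :=
  hQ.of_nonneg (lam := fun k => c k / ∑ k, c k) (fun k => div_nonneg (hc k) hpos.le)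
    (fun k hk => hD k ((div_pos_iff_of_pos_right hpos).1 hk))
    fun a => by simp only [ProbDist.mix_s18, sum_div, div_mul_eq_mul_div]

lemma exists_sum_mul_eq [Nonempty ι] (hQ : MixClosed Q) {c : ι → ℝ} (hc : ∀ k, 0 ≤ c k)
    {D : ι → ProbDist α} (hD : ∀ k, Q (D k)) :
    ∃ F, Q F ∧ ∀ a, (∑ k, c k) * F.f a = ∑ k, c k * (D k).f a := by
  rcases (sum_nonneg fun k _ => hc k).lt_or_eq with hpos | hzero
  · exact ⟨_, hQ.mix_s18 hc hpos fun k _ => hD k, ProbDist.sum_mul_mix_apply hc hpos D⟩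
  · obtain ⟨k⟩ := ‹Nonempty ι›
    have hc0 := (sum_eq_zero_iff_of_nonneg fun k _ => hc k).1 hzero.symm
    exact ⟨D k, hD k, fun a => by simp [hc0]⟩

lemma forall_mem {I : Type} {Q : I → ProbDist α → Prop} (hQ : ∀ i, MixClosed (Q i)) :
    MixClosed fun Δ => ∀ i, Q i Δ :=
  fun ι _ lam D Θ hlam hD hΘ i => hQ i ι lam D Θ hlam (fun k => hD k i) hΘ

lemma forall_pos_imp (L : α → Prop) : MixClosed fun Δ : ProbDist α => ∀ a, 0 < Δ.f a → L a := by
  intro ι _ lam D Θ hlam hD hΘ a ha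
  obtain ⟨k, hk⟩ := ProbDist.exists_pos_of_apply_eq_sum hΘ ha
  exact hD k a (pos_of_mul_pos_right hk (hlam k).le)

end MixClosed

end Mixtures

section Game

variable (G : PGS S P A1 A2) {ι : Type} [Fintype ι]

lemma PGS.mul_stepState_apply {c : ℝ} {cs : ι → ℝ} {t : S} {π : MixedI S A1}
    {πs : ι → MixedI S A1} (h : ∀ a, c * (π t).f a = ∑ k, cs k * (πs k t).f a)
    (π2 : MixedII S A2) (s : S) :
    c * (G.stepState t π π2).f s = ∑ k, cs k * (G.stepState t (πs k) π2).f s := by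
  simp only [PGS.stepState, mul_sum]
  conv_rhs => rw [sum_comm]
  refine sum_congr rfl fun a1 _ => ?_
  conv_rhs => rw [sum_comm]
  refine sum_congr rfl fun a2 _ => ?_
  calc c * ((π t).f a1 * (π2 t).f a2 * (G.δ t (a1, a2)).f s)
      = (c * (π t).f a1) * ((π2 t).f a2 * (G.δ t (a1, a2)).f s) := by ring
    _ = _ := by rw [h, sum_mul]; exact sum_congr rfl fun k _ => by ring

lemma PGS.stepDist_apply_eq_sum {Θ : ProbDist S} {π : MixedI S A1} {lam : ι → ℝ}
    {D : ι → ProbDist S} {πs : ι → MixedI S A1}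
    (h : ∀ t a, Θ.f t * (π t).f a = ∑ k, lam k * (D k).f t * (πs k t).f a)
    (π2 : MixedII S A2) (s : S) :
    (G.stepDist Θ π π2).f s = ∑ k, lam k * (G.stepDist (D k) (πs k) π2).f s := by
  simp only [PGS.stepDist, mul_sum]
  conv_rhs => rw [sum_comm]
  refine sum_congr rfl fun t _ => ?_
  rw [G.mul_stepState_apply (h t)]
  exact sum_congr rfl fun k _ => by ring

lemma mixClosed_sat_enf {φ : LFormula P} (hφ : MixClosed (Sat G φ)) :
    MixClosed (Sat G (.enf φ)) := by
  intro ι _ lam D Θ hlam hD hΘ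
  choose πs hπs using hD
  have := ProbDist.nonempty_of_apply_eq_sum hΘ
  choose π _ hπ using fun t => MixClosed.exists_sum_mul_eq (Q := fun _ : ProbDist A1 => True)
    (fun _ _ _ _ _ _ _ _ => trivial) (fun k => mul_nonneg (hlam k).le ((D k).nonneg t))
    (D := fun k => πs k t) fun _ => trivial
  refine ⟨π, fun π2 => hφ ι lam _ _ hlam (fun k => hπs k π2)
    (G.stepDist_apply_eq_sum (fun t a => ?_) π2)⟩
  rw [hΘ t, hπ t a]

lemma mixClosed_sat_psum {m : ℕ} {pr : Fin m → ℝ} {φ : Fin m → LFormula P}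
    (hφ : ∀ j, MixClosed (Sat G (φ j))) : MixClosed (Sat G (.psum m pr φ)) := by
  intro ι _ lam D Θ hlam hD hΘ
  choose E hDE hE using hD
  have := ProbDist.nonempty_of_apply_eq_sum hΘ
  choose F hF hFE using fun j =>
    (hφ j).exists_sum_mul_eq (fun k => (hlam k).le) fun k => hE k j
  refine ⟨F, fun s => ?_, hF⟩
  calc Θ.f s = ∑ k, ∑ j, lam k * (pr j * (E k j).f s) := by simp only [hΘ, hDE, mul_sum]
    _ = ∑ j, pr j * ((∑ k, lam k) * (F j).f s) := by
      rw [sum_comm]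
      refine sum_congr rfl fun j _ => ?_
      rw [hFE, mul_sum]
      exact sum_congr rfl fun k _ => by ring
    _ = ∑ j, pr j * (F j).f s := by simp only [ProbDist.sum_eq_one_of_apply_eq_sum hΘ, one_mul]

lemma mixClosed_sat_nsum {m : ℕ} {φ : Fin m → LFormula P}
    (hφ : ∀ j, MixClosed (Sat G (φ j))) : MixClosed (Sat G (.nsum m φ)) := by
  intro ι _ lam D Θ hlam hD hΘ
  choose p hp0 hp1 E hDE hE using hD
  have := ProbDist.nonempty_of_apply_eq_sum hΘ
  choose F hF hFE using fun j => (hφ j).exists_sum_mul_eq (c := fun k => lam k * p k j)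
    (fun k => mul_nonneg (hlam k).le (hp0 k j)) fun k => hE k j
  refine ⟨fun j => ∑ k, lam k * p k j, fun j => sum_nonneg fun k _ =>
    mul_nonneg (hlam k).le (hp0 k j), ?_, F, fun s => ?_, hF⟩
  · rw [sum_comm]
    simp only [← mul_sum, hp1, mul_one, ProbDist.sum_eq_one_of_apply_eq_sum hΘ]
  · calc Θ.f s = ∑ k, ∑ j, lam k * (p k j * (E k j).f s) := by simp only [hΘ, hDE, mul_sum]
      _ = ∑ j, (∑ k, lam k * p k j) * (F j).f s := by
        rw [sum_comm]
        refine sum_congr rfl fun j _ => ?_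
        rw [hFE]
        exact sum_congr rfl fun k _ => by ring

theorem mixClosed_sat {φ : LFormula P} (hφ : DisjFree φ) : MixClosed (Sat G φ) := by
  induction hφ with
  | atom p => exact MixClosed.forall_pos_imp (p ∈ G.label ·)
  | natom p => exact MixClosed.forall_pos_imp (p ∉ G.label ·)
  | conj I f _ ih => exact MixClosed.forall_mem ih
  | enf φ _ ih => exact mixClosed_sat_enf G ih
  | psum m pr f _ ih => exact mixClosed_sat_psum G ih
  | nsum m f _ ih => exact mixClosed_sat_nsum G ih

theorem disjFree_charState [DecidableEq A2] (n : ℕ) (s : S) : DisjFree (charState G n s) := by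
  induction n generalizing s with
  | zero =>
    refine .conj _ _ fun p => ?_
    by_cases hp : p ∈ G.label s
    · simpa [hp] using DisjFree.atom p
    · simpa [hp] using DisjFree.natom p
  | succ n ih => exact .conj _ _ fun π => .enf _ (.nsum _ _ fun b => .psum _ _ _ fun i => ih _)

lemma sat_charDist_of_apply_eq_sum {c : S → LFormula P} {Δ Θ : ProbDist S}
    (D : S → ProbDist S) (hΘ : ∀ t, Θ.f t = ∑ s, Δ.f s * (D s).f t)
    (hD : ∀ s, 0 < Δ.f s → Sat G (c s) (D s)) : Sat G (charDist c Δ) Θ := by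
  let e := Δ.support.equivFin.symm
  have mem_support : ∀ {s}, s ∈ Δ.support ↔ 0 < Δ.f s := by simp [ProbDist.support]
  refine ⟨fun i => D (e i), fun t => ?_, fun i => hD _ (mem_support.1 (e i).2)⟩
  rw [hΘ, ← sum_filter_of_ne fun s _ hs => (Δ.nonneg s).lt_of_ne' (left_ne_zero_of_mul hs)]
  change _ = ∑ i, Δ.f (e i) * (D (e i)).f t
  rw [e.sum_comp (fun x => Δ.f x * (D x).f t)]
  exact (sum_coe_sort Δ.support fun x => Δ.f x * (D x).f t).symm

lemma sat_charDist_of_lift [DecidableEq S] {c : S → LFormula P}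
    (hc : ∀ s, MixClosed (Sat G (c s))) {R : S → S → Prop}
    (hR : ∀ s t, R s t → Sat G (c s) (ProbDist.point t)) {Δ Θ : ProbDist S}
    (hΔΘ : Lift R Δ Θ) : Sat G (charDist c Δ) Θ := by
  obtain ⟨w, hw0, hwΔ, hwΘ, hwR⟩ := hΔΘ
  have conditional : ∀ s, ∃ D : ProbDist S,
      (∀ t, Δ.f s * D.f t = w s t) ∧ (0 < Δ.f s → Sat G (c s) D) := by
    intro s
    rcases (Δ.nonneg s).lt_or_eq with hpos | hzero
    · rw [← hwΔ] at hpos ⊢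
      refine ⟨ProbDist.mix_s18 (w s) (hw0 s) hpos ProbDist.point, fun t => ?_,
        fun _ => (hc s).mix_s18 _ _ fun t ht => hR s t (hwR s t ht)⟩
      rw [ProbDist.sum_mul_mix_apply]
      simp [ProbDist.point]
    · have hw := (sum_eq_zero_iff_of_nonneg fun t _ => hw0 s t).1 ((hwΔ s).trans hzero.symm)
      refine ⟨ProbDist.point s, fun t => ?_, fun h => absurd hzero h.ne⟩
      rw [← hzero, zero_mul, hw t (mem_univ t)]
  choose D hDw hD using conditional
  exact sat_charDist_of_apply_eq_sum G D (fun t => by simp only [hDw, hwΘ]) hD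

end Game

theorem charDist_carries_over_general {S P A1 A2 : Type}
    [Fintype S] [DecidableEq S] [Fintype A1] [Fintype A2] [DecidableEq A2]
    (G : PGS S P A1 A2) (n : ℕ)
    (h : ∀ s t : S, SimLn G n s t →
      Sat G (charState G n s) (ProbDist.point t)) :
    ∀ Δ Θ : ProbDist S, Lift (SimLn G n) Δ Θ →
      Sat G (charDist (charState G n) Δ) Θ :=
  fun _ _ => sat_charDist_of_lift G (fun s => mixClosed_sat G (disjFree_charState G n s)) h

/-- **Lemma (characteristic formulas on distributions).** If, for all states,
`s ≼^L_n t` implies that the point distribution of `t` satisfies `φ^n_s`, then for all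
distributions, `Δ (≼̄^L_n) Θ` implies that `Θ` satisfies `φ^n_Δ`. -/
theorem charDist_carries_over {S P A1 A2 : Type}
    [Fintype S] [DecidableEq S] [Fintype A1] [Fintype A2] [DecidableEq A2] [Fintype P]
    (G : PGS S P A1 A2) (n : ℕ)
    (h : ∀ s t : S, SimLn G n s t →
      Sat G (charState G n s) (ProbDist.point t)) :
    ∀ Δ Θ : ProbDist S, Lift (SimLn G n) Δ Θ →
      Sat G (charDist (charState G n) Δ) Θ :=
  charDist_carries_over_general G n h
end
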